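/- arXiv:1902.02152 — 6 statements merged into one kernel-verified Lean document; each statement's English description precedes it below -/
import Mathlib

section
/- Let G be a group and X → G a function such that the induced homomorphism F → G is surjective but not injective. Then for every i ∈ {1,…,n} and every sign ε ∈ {±1} there exists a nontrivial reduced word r in the alphabet X ∪ X⁻¹ whose first letter is x_i^{−ε}, whose last letter is x_i^{ε}, and which satisfies r =_G 1. -/
/-!
A nontrivial element of the kernel of `F → G` is represented by a nonempty reduced word `w`, and
every word representing a conjugate of it is again a relator. Conjugating `w` by the letter
`x_i^{-ε}` produces a reduced word with the required ends as soon as `w` neither begins nor ends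
with a letter of index `i`. If it does, conjugate first by a suitable `x_j^{±1}` with `j ≠ i`,
which exists because `n ≥ 2`.
-/

/-- Words in the alphabet `X ∪ X⁻¹` with `X = {x_1, …, x_n}` are lists of letters `(i, b)`,
the letter `(i, b)` being `x_i` if `b = true` and `x_i⁻¹` if `b = false` (so the inverse of the
letter `(i, b)` is `(i, !b)`).  `evalWord φ w` is the image of the word `w` in `G` under the
homomorphism `F(X) → G` induced by `φ : X → G`. -/
def evalWord {n : ℕ} {G : Type*} [Group G] (φ : Fin n → G) (w : List (Fin n × Bool)) : G :=
  FreeGroup.lift φ (FreeGroup.mk w)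

namespace FreeGroup

variable {α : Type*}

theorem IsReduced.cons_append_singleton {U : List (α × Bool)} {p q : α × Bool}
    (hU : IsReduced U) (hne : U ≠ [])
    (hp : ∀ a ∈ U.head?, p.1 = a.1 → p.2 = a.2)
    (hq : ∀ a ∈ U.getLast?, a.1 = q.1 → a.2 = q.2) :
    IsReduced (p :: U ++ [q]) := by
  rw [IsReduced, List.isChain_append, List.isChain_cons]
  refine ⟨⟨hp, hU⟩, List.isChain_singleton q, ?_⟩
  simpa [List.getLast?_cons, List.getLast?_eq_some_getLast hne] using hq

theorem isConj_mk_cons_append_inv (p : α × Bool) (U : List (α × Bool)) :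
    IsConj (mk U) (mk (p :: U ++ [(p.1, !p.2)])) := by
  refine isConj_iff.2 ⟨mk [p], ?_⟩
  rw [inv_mk, mul_mk, mul_mk]
  simp [invRev]

theorem exists_isConj_isReduced_ends_ne {w : List (α × Bool)} (hw : IsReduced w) (hne : w ≠ [])
    {i j : α} (hji : j ≠ i) :
    ∃ V, IsReduced V ∧ V ≠ [] ∧ IsConj (mk w) (mk V) ∧
      (∀ a ∈ V.head?, a.1 ≠ i) ∧ ∀ a ∈ V.getLast?, a.1 ≠ i := by
  by_cases hends : (∀ a ∈ w.head?, a.1 ≠ i) ∧ ∀ a ∈ w.getLast?, a.1 ≠ i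
  · exact ⟨w, hw, hne, IsConj.refl _, hends⟩
  obtain ⟨h, hh⟩ := Option.ne_none_iff_exists'.1 (mt List.head?_eq_none_iff.1 hne)
  obtain ⟨l, hl⟩ := Option.ne_none_iff_exists'.1 (mt List.getLast?_eq_none_iff.1 hne)
  -- One end of `w` has index `i ≠ j`, so a single sign `s` avoids cancellation at both ends.
  obtain ⟨s, hs_head, hs_last⟩ : ∃ s, (j = h.1 → s = h.2) ∧ (l.1 = j → l.2 = !s) := by
    simp only [hh, hl, Option.mem_def, Option.some.injEq, forall_eq', not_and_or, not_not] at hends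
    rcases hends with hi | hi
    · exact ⟨!l.2, fun hj => absurd (hj.trans hi) hji, by simp⟩
    · exact ⟨h.2, fun _ => rfl, fun hj => absurd (hj.symm.trans hi) hji⟩
  refine ⟨(j, s) :: w ++ [(j, !s)], ?_, by simp, isConj_mk_cons_append_inv (j, s) w, ?_, ?_⟩
  · exact hw.cons_append_singleton hne (by simpa [hh] using hs_head) (by simpa [hl] using hs_last)
  · simpa using hji
  · simpa [List.getLast?_cons] using hji

theorem exists_isReduced_isConj_head_last {w : List (α × Bool)} (hw : IsReduced w) (hne : w ≠ [])
    {p : α × Bool} {j : α} (hjp : j ≠ p.1) :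
    ∃ r, IsReduced r ∧ r ≠ [] ∧ r.head? = some p ∧ r.getLast? = some (p.1, !p.2) ∧
      IsConj (mk w) (mk r) := by
  obtain ⟨V, hV, hVne, hconj, hhead, hlast⟩ := exists_isConj_isReduced_ends_ne hw hne hjp
  refine ⟨p :: V ++ [(p.1, !p.2)], ?_, by simp, rfl, by simp [List.getLast?_cons],
    hconj.trans (isConj_mk_cons_append_inv p V)⟩
  exact hV.cons_append_singleton hVne (fun a ha h => absurd h.symm (hhead a ha))
    (fun a ha h => absurd h (hlast a ha))

end FreeGroup

theorem exists_relator_with_prescribed_ends_general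
    (n : ℕ) (hn : 2 ≤ n) (G : Type*) [Group G] (φ : Fin n → G)
    (hninj : ¬ Function.Injective (FreeGroup.lift φ))
    (i : Fin n) (ε : Bool) :
    ∃ r : List (Fin n × Bool), FreeGroup.reduce r = r ∧ r ≠ [] ∧
      r.head? = some (i, !ε) ∧ r.getLast? = some (i, ε) ∧ evalWord φ r = 1 := by
  obtain ⟨g, hg1, hg⟩ : ∃ g, FreeGroup.lift φ g = 1 ∧ g ≠ 1 := by
    simpa using (injective_iff_map_eq_one (FreeGroup.lift φ)).not.1 hninj
  have : Nontrivial (Fin n) := Fin.nontrivial_iff_two_le.2 hn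
  obtain ⟨j, hji⟩ := exists_ne i
  obtain ⟨r, hr, hne, hhead, hlast, hconj⟩ :=
    FreeGroup.exists_isReduced_isConj_head_last (p := (i, !ε)) FreeGroup.isReduced_toWord
      (FreeGroup.toWord_eq_nil_iff.not.2 hg) hji
  refine ⟨r, hr.reduce_eq, hne, hhead, by simpa using hlast, ?_⟩
  rw [FreeGroup.mk_toWord] at hconj
  exact isConj_one_right.1 (hg1 ▸ (FreeGroup.lift φ).map_isConj hconj)

/-- Let `G` be a group and `φ : X → G` a function such that the induced homomorphism
`F(X) → G` is surjective but not injective.  Then for every `i` and every sign `ε` there is a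
nontrivial reduced word with first letter `x_i^{-ε}` and last letter `x_i^{ε}` which evaluates
to `1` in `G`. -/
theorem exists_relator_with_prescribed_ends
    (n : ℕ) (hn : 2 ≤ n) (G : Type*) [Group G] (φ : Fin n → G)
    (hsurj : Function.Surjective (FreeGroup.lift φ))
    (hninj : ¬ Function.Injective (FreeGroup.lift φ))
    (i : Fin n) (ε : Bool) :
    ∃ r : List (Fin n × Bool), FreeGroup.reduce r = r ∧ r ≠ [] ∧
      r.head? = some (i, !ε) ∧ r.getLast? = some (i, ε) ∧ evalWord φ r = 1 :=
  exists_relator_with_prescribed_ends_general n hn G φ hninj i ε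
end

section
/- Let G be a group and X → G a function such that the induced homomorphism F → G is surjective but not injective. Let P ⊆ ℕ be the set of lengths of nontrivial reduced words w in the alphabet X ∪ X⁻¹ whose first letter is different from x_1^{−1}, whose last letter is x_1, and which satisfy w =_G 1. Then P is nonempty and the greatest common divisor of the elements of P divides 2. -/
/-! Stripping the letters `x₁^{±1}` from both ends of a nontrivial reduced relator gives a nonempty
reduced word `c` whose first and last letters are not `x₁^{±1}` and whose value commutes with `x₁`;
if the relator is a power of `x₁`, conjugate it by another generator instead. For every `e ≥ 1`
the word `c⁻¹ x₁⁻ᵉ c x₁ᵉ` is then reduced, trivial in `G`, does not start with `x₁⁻¹` and ends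
with `x₁`, so both `2|c| + 2` and `2|c| + 4` are lengths in `P`. -/

namespace List

variable {β : Type*} {p : β → Prop} {l : List β}

theorem exists_eq_append_cons_of_exists_not (h : ∃ a ∈ l, ¬p a) :
    ∃ l₁ a l₂, l = l₁ ++ a :: l₂ ∧ (∀ b ∈ l₁, p b) ∧ ¬p a := by
  induction l with
  | nil => simp at h
  | cons b l ih =>
    by_cases hb : p b
    · obtain ⟨l₁, a, l₂, rfl, h₁, ha⟩ := ih (by simpa [hb] using h)
      exact ⟨b :: l₁, a, l₂, rfl, by simpa [hb] using h₁, ha⟩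
    · exact ⟨[], b, l, rfl, by simp, hb⟩

theorem exists_eq_append_append_of_exists_not (h : ∃ a ∈ l, ¬p a) :
    ∃ l₁ m l₂, l = l₁ ++ m ++ l₂ ∧ (∀ a ∈ l₁, p a) ∧ (∀ a ∈ l₂, p a) ∧ m ≠ [] ∧
      (∀ a ∈ m.head?, ¬p a) ∧ (∀ a ∈ m.getLast?, ¬p a) := by
  obtain ⟨l₁, a, t, rfl, h₁, ha⟩ := exists_eq_append_cons_of_exists_not h
  obtain ⟨s, b, c, hrev, hs, hb⟩ :=
    exists_eq_append_cons_of_exists_not (l := (a :: t).reverse) ⟨a, by simp, ha⟩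
  have hat : a :: t = (c.reverse ++ [b]) ++ s.reverse := by simpa using congrArg reverse hrev
  have hhead : (c.reverse ++ [b]).head? = some a := by
    rw [← head?_append_of_ne_nil _ (by simp), ← hat, head?_cons]
  refine ⟨l₁, c.reverse ++ [b], s.reverse, by rw [append_assoc, hat], h₁, by simpa using hs,
    by simp, ?_, by simpa⟩
  simpa [hhead]

end List

namespace FreeGroup

variable {α : Type*} {L L₁ L₂ : List (α × Bool)}

theorem IsReduced.append_of_fst_ne (h₁ : IsReduced L₁) (h₂ : IsReduced L₂)
    (h : ∀ a ∈ L₁.getLast?, ∀ b ∈ L₂.head?, a.1 ≠ b.1) : IsReduced (L₁ ++ L₂) :=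
  List.isChain_append.mpr ⟨h₁, h₂, fun a ha b hb hab => absurd hab (h a ha b hb)⟩

theorem IsReduced.invRev (h : IsReduced L) : IsReduced (invRev L) := by
  classical
  rw [isReduced_iff_reduce_eq] at h ⊢
  rw [reduce_invRev, h]

theorem isReduced_replicate (a : α × Bool) (e : ℕ) : IsReduced (List.replicate e a) :=
  List.isChain_replicate_of_rel _ fun _ => rfl

theorem mk_replicate (a : α) (e : ℕ) : mk (List.replicate e (a, true)) = of a ^ e := by
  rw [of, pow_mk, List.flatten_replicate_singleton]

theorem mk_mem_zpowers_of {x : α} (h : ∀ a ∈ L, a.1 = x) : mk L ∈ Subgroup.zpowers (of x) := by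
  induction L with
  | nil => exact Subgroup.one_mem _
  | cons a L ih =>
    obtain ⟨y, b⟩ := a
    obtain rfl : y = x := h _ List.mem_cons_self
    rw [← List.singleton_append, ← mul_mk]
    refine Subgroup.mul_mem _ ?_ (ih fun a ha => h a (List.mem_cons_of_mem _ ha))
    cases b
    · rw [show [(y, false)] = invRev [(y, true)] from rfl, ← inv_mk]
      exact Subgroup.inv_mem _ (Subgroup.mem_zpowers _)
    · exact Subgroup.mem_zpowers _

theorem head?_invRev : (invRev L).head? = L.getLast?.map fun a => (a.1, !a.2) := by
  simp [invRev, List.head?_reverse, List.getLast?_map]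

theorem getLast?_invRev : (invRev L).getLast? = L.head?.map fun a => (a.1, !a.2) := by
  simp [invRev, List.getLast?_reverse, List.head?_map]

variable {G : Type*} [Group G] (f : α → G) (x : α)

theorem commute_lift_of_mem_zpowers {u : FreeGroup α} (hu : u ∈ Subgroup.zpowers (of x)) :
    Commute (lift f u) (f x) := by
  obtain ⟨k, rfl⟩ := Subgroup.mem_zpowers_iff.mp hu
  simp [(Commute.refl (f x)).zpow_left k]

structure IsCommutingCore (c : List (α × Bool)) : Prop where
  isReduced : IsReduced c
  ne_nil : c ≠ []
  head?_fst_ne : ∀ a ∈ c.head?, a.1 ≠ x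
  getLast?_fst_ne : ∀ a ∈ c.getLast?, a.1 ≠ x
  commute : Commute (lift f (mk c)) (f x)

def commutatorWord (c : List (α × Bool)) (e : ℕ) : List (α × Bool) :=
  invRev c ++ List.replicate e (x, false) ++ c ++ List.replicate e (x, true)

variable {x} {c : List (α × Bool)} {e : ℕ}

theorem length_commutatorWord : (commutatorWord x c e).length = 2 * c.length + 2 * e := by
  simp only [commutatorWord, List.length_append, invRev_length, List.length_replicate]
  ring

theorem getLast?_commutatorWord (he : e ≠ 0) :
    (commutatorWord x c e).getLast? = some (x, true) := by
  simp [commutatorWord, List.getLast?_append, List.getLast?_replicate, he]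

theorem head?_commutatorWord_ne (hne : c ≠ []) (hlast : ∀ a ∈ c.getLast?, a.1 ≠ x) :
    (commutatorWord x c e).head? ≠ some (x, false) := by
  obtain ⟨a, ha⟩ := Option.ne_none_iff_exists'.mp (List.getLast?_eq_none_iff.not.mpr hne)
  rw [commutatorWord, List.append_assoc, List.append_assoc, List.head?_append, head?_invRev, ha]
  simpa using fun h => absurd h (hlast a ha)

theorem isReduced_commutatorWord (hc : IsReduced c) (hne : c ≠ [])
    (hhead : ∀ a ∈ c.head?, a.1 ≠ x) (hlast : ∀ a ∈ c.getLast?, a.1 ≠ x) (he : e ≠ 0) :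
    IsReduced (commutatorWord x c e) := by
  have hrep : List.replicate e (x, false) ≠ [] := by simp [he]
  refine ((hc.invRev.append_of_fst_ne (isReduced_replicate _ _) ?_).append_of_fst_ne hc ?_
    ).append_of_fst_ne (isReduced_replicate _ _) ?_
  · intro _ ha b hb
    obtain ⟨a, ha', rfl⟩ := Option.mem_map.mp (getLast?_invRev ▸ ha)
    rw [List.head?_replicate, if_neg he, Option.mem_some_iff] at hb
    exact hb ▸ hhead a ha'
  · intro a ha b hb
    rw [List.getLast?_append_of_ne_nil _ hrep, List.getLast?_replicate, if_neg he,
      Option.mem_some_iff] at ha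
    exact ha ▸ (hhead b hb).symm
  · intro a ha b hb
    rw [List.getLast?_append_of_ne_nil _ hne] at ha
    rw [List.head?_replicate, if_neg he, Option.mem_some_iff] at hb
    exact hb ▸ hlast a ha

theorem lift_mk_commutatorWord (hcomm : Commute (lift f (mk c)) (f x)) :
    lift f (mk (commutatorWord x c e)) = 1 := by
  have hinv : List.replicate e (x, false) = invRev (List.replicate e (x, true)) := by
    simp [invRev]
  rw [commutatorWord, hinv, ← mul_mk, ← mul_mk, ← mul_mk, ← inv_mk, ← inv_mk, mk_replicate]
  simp only [_root_.map_mul, _root_.map_inv, _root_.map_pow, lift_apply_of]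
  simpa [commutatorElement_def] using
    commutatorElement_eq_one_iff_commute.mpr (hcomm.pow_right e).inv_inv

theorem exists_isCommutingCore_of_exists_fst_ne {r : List (α × Bool)} (hr : IsReduced r)
    (hcomm : Commute (lift f (mk r)) (f x)) (hx : ∃ a ∈ r, a.1 ≠ x) :
    ∃ c, IsCommutingCore f x c := by
  obtain ⟨l₁, c, l₂, rfl, h₁, h₂, hne, hhead, hlast⟩ :=
    List.exists_eq_append_append_of_exists_not hx
  refine ⟨c, hr.infix ⟨l₁, l₂, rfl⟩, hne, hhead, hlast, ?_⟩
  have hc : mk c = (mk l₁)⁻¹ * mk (l₁ ++ c ++ l₂) * (mk l₂)⁻¹ := by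
    rw [← mul_mk, ← mul_mk]
    group
  rw [hc, _root_.map_mul, _root_.map_mul]
  exact ((commute_lift_of_mem_zpowers f x (inv_mem (mk_mem_zpowers_of h₁))).mul_left hcomm).mul_left
    (commute_lift_of_mem_zpowers f x (inv_mem (mk_mem_zpowers_of h₂)))

theorem isCommutingCore_conj {r : List (α × Bool)} (hr : IsReduced r) (hne : r ≠ [])
    (hr1 : lift f (mk r) = 1) (h : ∀ a ∈ r, a.1 = x) {y : α} (hyx : y ≠ x) :
    IsCommutingCore f x ([(y, true)] ++ r ++ [(y, false)]) := by
  refine ⟨(IsReduced.singleton.append_of_fst_ne hr ?_).append_of_fst_ne .singleton ?_,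
    by simp, by simpa using hyx, ?_, ?_⟩
  · intro a ha b hb
    rw [List.getLast?_singleton, Option.mem_some_iff] at ha
    rw [← ha, h b (List.mem_of_mem_head? hb)]
    exact hyx
  · intro a ha b hb
    rw [List.getLast?_append_of_ne_nil _ hne] at ha
    rw [List.head?_singleton, Option.mem_some_iff] at hb
    rw [← hb, h a (List.mem_of_mem_getLast? ha)]
    exact hyx.symm
  · intro a ha
    rw [List.getLast?_append_of_ne_nil _ (List.cons_ne_nil _ _), List.getLast?_singleton,
      Option.mem_some_iff] at ha
    exact ha ▸ hyx
  · have hconj : mk ([(y, true)] ++ r ++ [(y, false)]) = of y * mk r * (of y)⁻¹ := by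
      rw [← mul_mk, ← mul_mk, of, inv_mk]
      rfl
    rw [hconj, _root_.map_mul, _root_.map_mul, hr1, mul_one, ← _root_.map_mul, mul_inv_cancel,
      _root_.map_one]
    exact Commute.one_left _

theorem exists_isCommutingCore [Nontrivial α] {r : List (α × Bool)} (hr : IsReduced r)
    (hne : r ≠ []) (hr1 : lift f (mk r) = 1) : ∃ c, IsCommutingCore f x c := by
  by_cases h : ∀ a ∈ r, a.1 = x
  · obtain ⟨y, hyx⟩ := exists_ne x
    exact ⟨_, isCommutingCore_conj f hr hne hr1 h hyx⟩
  · push Not at h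
    exact exists_isCommutingCore_of_exists_fst_ne f hr (hr1 ▸ Commute.one_left _) h

theorem IsCommutingCore.exists_relator [DecidableEq α]
    (hc : IsCommutingCore f x c) (he : e ≠ 0) :
    ∃ w : List (α × Bool), reduce w = w ∧ w ≠ [] ∧ w.length = 2 * c.length + 2 * e ∧
      w.head? ≠ some (x, false) ∧ w.getLast? = some (x, true) ∧ lift f (FreeGroup.mk w) = 1 :=
  ⟨commutatorWord x c e,
    (isReduced_commutatorWord hc.isReduced hc.ne_nil hc.head?_fst_ne hc.getLast?_fst_ne
      he).reduce_eq,
    List.ne_nil_of_mem (List.mem_of_getLast? (getLast?_commutatorWord he)),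
    length_commutatorWord, head?_commutatorWord_ne hc.ne_nil hc.getLast?_fst_ne,
    getLast?_commutatorWord he, lift_mk_commutatorWord f hc.commute⟩

end FreeGroup

/-- Let `G` be a group and `φ : X → G` a function such that the induced homomorphism
`F(X) → G` is surjective but not injective.  Let `P` be the set of lengths of nontrivial
reduced words whose first letter differs from `x_1⁻¹`, whose last letter is `x_1`, and which
evaluate to `1` in `G`.  Then `P` is nonempty and the greatest common divisor of the elements
of `P` divides `2` (equivalently, some finite subset of `P` has gcd dividing `2`). -/
theorem period_divides_two
    (n : ℕ) (hn : 2 ≤ n) (G : Type*) [Group G] (φ : Fin n → G)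
    (hninj : ¬ Function.Injective (FreeGroup.lift φ)) :
    {l : ℕ | ∃ w : List (Fin n × Bool), FreeGroup.reduce w = w ∧ w ≠ [] ∧ w.length = l ∧
        w.head? ≠ some (⟨0, by omega⟩, false) ∧ w.getLast? = some (⟨0, by omega⟩, true) ∧
        evalWord φ w = 1}.Nonempty ∧
      ∃ T : Finset ℕ,
        (T : Set ℕ) ⊆ {l : ℕ | ∃ w : List (Fin n × Bool),
            FreeGroup.reduce w = w ∧ w ≠ [] ∧ w.length = l ∧
            w.head? ≠ some (⟨0, by omega⟩, false) ∧ w.getLast? = some (⟨0, by omega⟩, true) ∧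
            evalWord φ w = 1} ∧
        T.Nonempty ∧ T.gcd id ∣ 2 := by
  have : Nontrivial (Fin n) := Fin.nontrivial_iff_two_le.mpr hn
  obtain ⟨u, hu1, hu⟩ : ∃ u, FreeGroup.lift φ u = 1 ∧ u ≠ 1 := by
    simpa [injective_iff_map_eq_one] using hninj
  obtain ⟨c, hc⟩ := FreeGroup.exists_isCommutingCore φ (x := ⟨0, by omega⟩)
    FreeGroup.isReduced_toWord (FreeGroup.toWord_eq_nil_iff.not.mpr hu)
    (by rwa [FreeGroup.mk_toWord])
  have hP := fun e (he : e ≠ 0) => hc.exists_relator φ he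
  refine ⟨?_, {2 * c.length + 2 * 1, 2 * c.length + 2 * 2}, ?_, by simp, ?_⟩
  · exact ⟨_, hP 1 one_ne_zero⟩
  · simp only [Finset.coe_insert, Finset.coe_singleton, Set.insert_subset_iff,
      Set.singleton_subset_iff]
    exact ⟨hP 1 one_ne_zero, hP 2 two_ne_zero⟩
  · rw [Finset.gcd_insert, Finset.gcd_singleton, id, id, normalize_eq]
    have h := Nat.dvd_sub (Nat.gcd_dvd_right (2 * c.length + 2 * 1) (2 * c.length + 2 * 2))
      (Nat.gcd_dvd_left _ _)
    rwa [show 2 * c.length + 2 * 2 - (2 * c.length + 2 * 1) = 2 by omega] at h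
end

section
/- Let J be a finite group, q a prime not dividing |J|, and E a nonzero irreducible (simple) module over the group algebra 𝔽_q[J]. Then for every m ≥ 1, the number of m-tuples (y_1,…,y_m) ∈ (E^m)^m whose entries generate the direct sum E^m as an 𝔽_q[J]-module is at least ∏_{j=1}^m (1 − |E|^{−j}) · |E|^{m²}. -/
/-! With `D = End_R E`, a division ring by Schur's lemma, the `R`-linear maps `E^m → E` are exactly
the maps `v ↦ ∑ⱼ cⱼ (vⱼ)` with `c ∈ D^m`. Since `E^m` is semisimple, a proper submodule of `E^m`
is killed by a nonzero such map, so a tuple `(yᵢ)` generates `E^m` iff its transpose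
`(j ↦ (i ↦ yᵢ j))` is `D`-linearly independent in `E^m`. The `D`-space `E^m` has `|E|^m`
elements, so there are `∏_{i<m} (|E|^m - |D|^i) ≥ ∏_{i<m} (|E|^m - |E|^i)` independent tuples,
and this product equals the claimed bound. -/

open Finset

section Generation

variable {R E : Type*} [Ring R] [AddCommGroup E] [Module R E] {ι κ : Type*}

theorem exists_linearMap_ne_zero_le_ker [IsSemisimpleModule R (κ → E)]
    {N : Submodule R (κ → E)} (hN : N ≠ ⊤) :
    ∃ φ : (κ → E) →ₗ[R] E, φ ≠ 0 ∧ N ≤ LinearMap.ker φ := by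
  obtain ⟨P, hP⟩ := exists_isCompl N
  have hP0 : P ≠ ⊥ := fun h => hN (eq_top_of_isCompl_bot (h ▸ hP))
  obtain ⟨p, hpP, hp0⟩ := Submodule.exists_mem_ne_zero_of_ne_bot hP0
  obtain ⟨k, hk⟩ := Function.ne_iff.mp hp0
  refine ⟨(LinearMap.proj k).comp (P.subtype.comp (P.projectionOnto N hP.symm)), ?_, ?_⟩
  · intro h
    apply hk
    simpa [Submodule.projectionOnto_apply_left hP.symm ⟨p, hpP⟩] using LinearMap.congr_fun h p
  · intro v hv
    simp [Submodule.projectionOnto_apply_right hP.symm ⟨v, hv⟩]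

theorem span_eq_top_iff_forall_linearMap_eq_zero [IsSemisimpleModule R (κ → E)]
    (s : Set (κ → E)) :
    Submodule.span R s = ⊤ ↔ ∀ φ : (κ → E) →ₗ[R] E, (∀ v ∈ s, φ v = 0) → φ = 0 := by
  refine ⟨fun hs φ hφ => ?_, fun h => ?_⟩
  · rw [← LinearMap.ker_eq_top, eq_top_iff, ← hs, Submodule.span_le]
    exact hφ
  · by_contra hs
    obtain ⟨φ, hφ0, hφ⟩ := exists_linearMap_ne_zero_le_ker hs
    exact hφ0 (h φ fun v hv => hφ (Submodule.subset_span hv))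

theorem span_range_eq_top_iff_linearIndependent_swap [Fintype κ] [DecidableEq κ]
    [IsSemisimpleModule R (κ → E)] (y : ι → κ → E) :
    Submodule.span R (Set.range y) = ⊤ ↔
      LinearIndependent (Module.End R E) (Function.swap y) := by
  let lsum := LinearMap.lsum R (M := E) (fun _ : κ => E) ℕ
  have hsum : ∀ c : κ → Module.End R E, ∑ k, c k • Function.swap y k = fun i => lsum c (y i) := by
    intro c
    ext i
    simp [lsum, LinearMap.lsum_apply, Finset.sum_apply]
  rw [span_eq_top_iff_forall_linearMap_eq_zero, Fintype.linearIndependent_iff]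
  refine ⟨fun h c hc => ?_, fun h φ hφ => ?_⟩
  · have hc0 : lsum c = 0 := h _ (Set.forall_mem_range.mpr (congrFun ((hsum c).symm.trans hc)))
    exact congrFun (lsum.map_eq_zero_iff.mp hc0)
  · have hφ0 : lsum.symm φ = 0 :=
      funext (h _ (by rw [hsum, lsum.apply_symm_apply]; exact funext (hφ _ ⟨·, rfl⟩)))
    simpa using congrArg lsum hφ0

end Generation

theorem pow_sub_pow_le_card_linearIndependent {D V : Type*} [DivisionRing D] [Finite D]
    [AddCommGroup V] [Module D V] [Finite V] [Nontrivial V] {k m : ℕ} (hk : k ≤ m) :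
    ∏ i : Fin k, (Nat.card V ^ m - Nat.card V ^ (i : ℕ)) ≤
      Nat.card {z : Fin k → Fin m → V // LinearIndependent D z} := by
  have : Fintype D := Fintype.ofFinite D
  have : Fintype V := Fintype.ofFinite V
  set d := Module.finrank D V
  have hd : 0 < d := Module.finrank_pos
  have hV : Nat.card V = Fintype.card D ^ d := by
    rw [Nat.card_eq_fintype_card, Module.card_eq_pow_finrank (K := D)]
  have hrank : Module.finrank D (Fin m → V) = m * d := by
    simp [Module.finrank_pi_fintype, d]
  rw [card_linearIndependent (hk.trans (by rw [hrank]; exact Nat.le_mul_of_pos_right m hd)), hrank]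
  refine prod_le_prod' fun i _ => ?_
  rw [hV, ← pow_mul, ← pow_mul, mul_comm d]
  exact Nat.sub_le_sub_left (Nat.pow_le_pow_right Fintype.card_pos (Nat.le_mul_of_pos_left _ hd)) _

theorem prod_one_sub_inv_pow_mul_pow_sq {x : ℝ} (hx : x ≠ 0) (m : ℕ) :
    (∏ j ∈ Icc 1 m, (1 - 1 / x ^ j)) * x ^ (m ^ 2) = ∏ i : Fin m, (x ^ m - x ^ (i : ℕ)) := by
  have hIcc : ∏ j ∈ Icc 1 m, (1 - 1 / x ^ j) = ∏ i ∈ range m, (1 - 1 / x ^ (i + 1)) := by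
    rw [range_eq_Ico, prod_Ico_add' (fun j => 1 - 1 / x ^ j), zero_add, Ico_add_one_right_eq_Icc]
  have hsq : x ^ (m ^ 2) = ∏ _i ∈ range m, x ^ m := by
    rw [prod_const, card_range, ← pow_mul, sq]
  rw [hIcc, hsq, ← prod_mul_distrib, Fin.prod_univ_eq_prod_range (fun i => x ^ m - x ^ i),
    ← prod_range_reflect]
  refine prod_congr rfl fun i hi => ?_
  have hm : x ^ m = x ^ (m - 1 - i) * x ^ (i + 1) := by
    have hi' := mem_range.mp hi
    rw [← pow_add, show m - 1 - i + (i + 1) = m by omega]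
  rw [hm]
  field_simp
  ring

theorem count_generating_tuples_of_isotypic_general
    (J : Type*) [Group J] [Finite J] (q : ℕ) (hq : q.Prime)
    (E : Type*) [AddCommGroup E] [Module (MonoidAlgebra (ZMod q) J) E]
    [IsSimpleModule (MonoidAlgebra (ZMod q) J) E]
    (m : ℕ) :
    (∏ j ∈ Finset.Icc 1 m, (1 - 1 / (Nat.card E : ℝ) ^ j)) * (Nat.card E : ℝ) ^ (m ^ 2) ≤
      (Nat.card {y : Fin m → (Fin m → E) //
        Submodule.span (MonoidAlgebra (ZMod q) J) (Set.range y) = ⊤} : ℝ) := by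
  classical
  set R := MonoidAlgebra (ZMod q) J
  have : NeZero q := ⟨hq.ne_zero⟩
  have : Finite R := Module.finite_of_finite (ZMod q)
  have : Finite E := Module.finite_of_finite R
  have : Nontrivial E := IsSimpleModule.nontrivial R E
  have : Finite (Module.End R E) := Finite.of_injective _ DFunLike.coe_injective
  have hcount : Nat.card {y : Fin m → Fin m → E // Submodule.span R (Set.range y) = ⊤} =
      Nat.card {z : Fin m → Fin m → E // LinearIndependent (Module.End R E) z} :=
    Nat.card_congr ((Equiv.piComm _).subtypeEquiv span_range_eq_top_iff_linearIndependent_swap)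
  calc (∏ j ∈ Icc 1 m, (1 - 1 / (Nat.card E : ℝ) ^ j)) * (Nat.card E : ℝ) ^ (m ^ 2)
      = ∏ i : Fin m, ((Nat.card E ^ m - Nat.card E ^ (i : ℕ) : ℕ) : ℝ) := by
        rw [prod_one_sub_inv_pow_mul_pow_sq (Nat.cast_ne_zero.mpr Nat.card_pos.ne')]
        refine prod_congr rfl fun i _ => ?_
        rw [Nat.cast_sub (Nat.pow_le_pow_right Nat.card_pos i.is_lt.le), Nat.cast_pow, Nat.cast_pow]
    _ ≤ _ := by
        rw [← Nat.cast_prod, hcount]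
        exact_mod_cast pow_sub_pow_le_card_linearIndependent le_rfl

/-- Let `J` be a finite group, `q` a prime not dividing `|J|`, and `E` a nonzero irreducible
(simple) module over the group algebra `𝔽_q[J]`.  Then for every `m ≥ 1` the number of
`m`-tuples of elements of `E^m` which generate `E^m` as an `𝔽_q[J]`-module is at least
`∏_{j=1}^m (1 - |E|^{-j}) · |E|^{m²}`. -/
theorem count_generating_tuples_of_isotypic
    (J : Type*) [Group J] [Finite J] (q : ℕ) (hq : q.Prime) (hqJ : ¬ q ∣ Nat.card J)
    (E : Type*) [AddCommGroup E] [Module (MonoidAlgebra (ZMod q) J) E]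
    [IsSimpleModule (MonoidAlgebra (ZMod q) J) E]
    (m : ℕ) (hm : 1 ≤ m) :
    (∏ j ∈ Finset.Icc 1 m, (1 - 1 / (Nat.card E : ℝ) ^ j)) * (Nat.card E : ℝ) ^ (m ^ 2) ≤
      (Nat.card {y : Fin m → (Fin m → E) //
        Submodule.span (MonoidAlgebra (ZMod q) J) (Set.range y) = ⊤} : ℝ) :=
  count_generating_tuples_of_isotypic_general J q hq E m
end

section
/- Let J be a finite group, f : F → J a surjective homomorphism with kernel K, and q > |J| a prime. Let K' = K/[K,K]K^q = H_1(K; 𝔽_q), regarded as an 𝔽_q[J]-module via the conjugation action of F on K. Let E be an irreducible 𝔽_q[J]-module, let K'_E be the E-isotypic component of K' and π_E : K' → K'_E the canonical projection, and let G = E ⋊ J be the semidirect product for the given action, with its natural projection G → J. Then for any finite tuple R of elements of F, there exists a surjective homomorphism F/⟪R⟫ ↠ G carrying f if and only if every entry of R lies in K and the images under π_E of the classes in K' of the entries of R do not generate K'_E as an 𝔽_q[J]-module. -/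
open Function
open scoped commutatorElement

/-- The action of `J` by multiplicative automorphisms on (the multiplicative version of) a
module `E` over the group algebra `𝔽_q[J]`, given by the module structure. -/
noncomputable def jMulAut (q : ℕ) (J : Type*) [Group J] (E : Type*) [AddCommGroup E]
    [Module (MonoidAlgebra (ZMod q) J) E] : J →* MulAut (Multiplicative E) where
  toFun j :=
    { toFun := fun e => Multiplicative.ofAdd (MonoidAlgebra.of (ZMod q) J j • e.toAdd)
      invFun := fun e => Multiplicative.ofAdd (MonoidAlgebra.of (ZMod q) J j⁻¹ • e.toAdd)
      left_inv := fun e => by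
        show Multiplicative.ofAdd (MonoidAlgebra.of (ZMod q) J j⁻¹ •
          MonoidAlgebra.of (ZMod q) J j • e.toAdd) = e
        rw [← mul_smul, ← map_mul, inv_mul_cancel, map_one, one_smul]
        rfl
      right_inv := fun e => by
        show Multiplicative.ofAdd (MonoidAlgebra.of (ZMod q) J j •
          MonoidAlgebra.of (ZMod q) J j⁻¹ • e.toAdd) = e
        rw [← mul_smul, ← map_mul, mul_inv_cancel, map_one, one_smul]
        rfl
      map_mul' := fun a b => by
        show Multiplicative.ofAdd (MonoidAlgebra.of (ZMod q) J j • (a.toAdd + b.toAdd)) = _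
        rw [smul_add]
        rfl }
  map_one' := by
    ext e
    show Multiplicative.ofAdd (MonoidAlgebra.of (ZMod q) J (1 : J) • e.toAdd) = e
    rw [map_one, one_smul]
    rfl
  map_mul' := fun a b => by
    ext e
    show Multiplicative.ofAdd (MonoidAlgebra.of (ZMod q) J (a * b) • e.toAdd) =
      Multiplicative.ofAdd (MonoidAlgebra.of (ZMod q) J a •
        MonoidAlgebra.of (ZMod q) J b • e.toAdd)
    rw [map_mul, mul_smul]

/-- The sum of all simple submodules of `V` which are not isomorphic to `E`; for a semisimple
module `V` this is the kernel of the canonical projection `π_E` of `V` onto its `E`-isotypic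
component. -/
def nonIsotypicPart (A : Type*) [Ring A] (V : Type*) [AddCommGroup V] [Module A V]
    (E : Type*) [AddCommGroup E] [Module A E] : Submodule A V :=
  sSup {p : Submodule A V | IsSimpleModule A p ∧ ¬ Nonempty (p ≃ₗ[A] E)}


/-!
A surjection `F/⟪R⟫ ↠ E ⋊ J` carrying `f` is the same as a surjection `ψ : F ↠ E ⋊ J` over `J`
killing `R`. On `K = ker f` such a `ψ` restricts to a conjugation-equivariant surjection `K ↠ E`;
as `E` is abelian of exponent `q`, it factors through `K'` as a surjective `𝔽_q[J]`-linear map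
`ℓ : K' ↠ E`, and `ψ` kills `R` iff `R ⊆ K` and `ℓ` kills the classes of `R`. Conversely every
such `ℓ` comes from some `ψ`: dividing `F` by the kernel of `K ↠ K' ↠ E` gives an extension of `J`
by `E`, which splits by Schur–Zassenhaus because `q ∤ |J|`. Finally, as `K'` is semisimple, a
surjection `K' ↠ E` killing a submodule `M` exists iff `M` and the non-`E`-isotypic part of `K'`
do not generate `K'`.
-/

section Isotypic

variable {A V E : Type*} [Ring A] [AddCommGroup V] [Module A V] [AddCommGroup E] [Module A E]

theorem nonIsotypicPart_le_ker [IsSimpleModule A E] (ℓ : V →ₗ[A] E) :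
    nonIsotypicPart A V E ≤ LinearMap.ker ℓ := by
  refine sSup_le ?_
  rintro p ⟨hp, hpE⟩
  obtain hbij | hzero := (ℓ ∘ₗ p.subtype).bijective_or_eq_zero
  · exact (hpE ⟨LinearEquiv.ofBijective _ hbij⟩).elim
  · rw [← Submodule.range_subtype p, LinearMap.range_le_ker_iff, hzero]

theorem exists_surjective_linearMap_of_sup_nonIsotypicPart_ne_top [IsSemisimpleModule A V]
    {M : Submodule A V} (hM : M ⊔ nonIsotypicPart A V E ≠ ⊤) :
    ∃ ℓ : V →ₗ[A] E, Surjective ℓ ∧ M ≤ LinearMap.ker ℓ := by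
  obtain ⟨C, hC, hMC⟩ :=
    (eq_top_or_exists_le_coatom (M ⊔ nonIsotypicPart A V E)).resolve_left hM
  obtain ⟨S, hCS⟩ := exists_isCompl C
  have hS : IsAtom S := hCS.symm.isAtom_iff_isCoatom.2 hC
  have : IsSimpleModule A S := isSimpleModule_iff_isAtom.2 hS
  obtain ⟨e⟩ : Nonempty (S ≃ₗ[A] E) := by
    by_contra hSE
    have hS_le : S ≤ nonIsotypicPart A V E := le_sSup ⟨this, hSE⟩
    exact hS.1 (hCS.symm.disjoint.eq_bot_of_le (hS_le.trans (le_sup_right.trans hMC)))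
  refine ⟨e ∘ₗ S.projectionOnto C hCS.symm,
    e.surjective.comp (Submodule.projectionOnto_surjective _), ?_⟩
  rw [LinearEquiv.ker_comp, Submodule.ker_projectionOnto]
  exact le_sup_left.trans hMC

theorem sup_nonIsotypicPart_ne_top_iff [IsSimpleModule A E] [IsSemisimpleModule A V]
    {M : Submodule A V} :
    M ⊔ nonIsotypicPart A V E ≠ ⊤ ↔ ∃ ℓ : V →ₗ[A] E, Surjective ℓ ∧ M ≤ LinearMap.ker ℓ := by
  refine ⟨exists_surjective_linearMap_of_sup_nonIsotypicPart_ne_top, ?_⟩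
  rintro ⟨ℓ, hℓ, hM⟩ htop
  have hℓ0 : ℓ = 0 := LinearMap.ker_eq_top.1 <| top_le_iff.1 <|
    htop ▸ sup_le hM (nonIsotypicPart_le_ker ℓ)
  have := IsSimpleModule.nontrivial A E
  obtain ⟨e, he⟩ := exists_ne (0 : E)
  obtain ⟨v, rfl⟩ := hℓ e
  exact he (by rw [hℓ0, LinearMap.zero_apply])

end Isotypic

section GroupAlgebra

variable {q : ℕ} {J V W : Type*} [Group J] [AddCommGroup V] [AddCommGroup W]
  [Module (MonoidAlgebra (ZMod q) J) V] [Module (MonoidAlgebra (ZMod q) J) W]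

def AddMonoidHom.toMonoidAlgebraLinearMap [NeZero q] (g : V →+ W)
    (hg : ∀ j v, g (MonoidAlgebra.of (ZMod q) J j • v) = MonoidAlgebra.of (ZMod q) J j • g v) :
    V →ₗ[MonoidAlgebra (ZMod q) J] W where
  toFun := g
  map_add' := g.map_add
  map_smul' a v := by
    rw [RingHom.id_apply]
    induction a using MonoidAlgebra.induction_on with
    | of j => exact hg j v
    | add a b ha hb => rw [add_smul, add_smul, map_add, ha, hb]
    | smul r a ha =>
      rw [← ZMod.natCast_zmod_val r, Nat.cast_smul_eq_nsmul, smul_assoc, smul_assoc, map_nsmul,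
        ha]

theorem jMulAut_apply (j : J) (v : Multiplicative V) :
    jMulAut q J V j v = Multiplicative.ofAdd (MonoidAlgebra.of (ZMod q) J j • v.toAdd) :=
  rfl

end GroupAlgebra

section ZModAlgebra

variable {q : ℕ} {V : Type*} [AddCommGroup V]

theorem Multiplicative.pow_eq_one_of_zmodAlgebra (A : Type*) [Ring A] [Algebra (ZMod q) A]
    [Module A V] (x : Multiplicative V) : x ^ q = 1 := by
  rw [← toAdd_eq_zero, toAdd_pow, ← Nat.cast_smul_eq_nsmul A,
    ← map_natCast (algebraMap (ZMod q) A), ZMod.natCast_self, map_zero, zero_smul]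

theorem Multiplicative.coprime_card_of_zmodAlgebra [Fact q.Prime] (A : Type*) [Ring A]
    [Algebra (ZMod q) A] [Module A V] [Finite V] {m : ℕ} (hm : m ≠ 0) (hmq : m < q) :
    (Nat.card (Multiplicative V)).Coprime m := by
  have hV : IsPGroup q (Multiplicative V) := fun x =>
    ⟨1, by rw [pow_one]; exact pow_eq_one_of_zmodAlgebra A x⟩
  obtain ⟨k, hk⟩ := hV.exists_card_eq
  rw [hk]
  exact (Nat.coprime_of_lt_prime hm hmq Fact.out).pow_left k

end ZModAlgebra

theorem exists_surjective_quotient_normalClosure_hom_iff {Γ G ι : Type*} [Group Γ] [Group G]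
    (R : ι → Γ) (p : (Γ →* G) → Prop) :
    (∃ φ : Γ ⧸ Subgroup.normalClosure (Set.range R) →* G,
      Surjective φ ∧ p (φ.comp (QuotientGroup.mk' _))) ↔
    ∃ ψ : Γ →* G, Surjective ψ ∧ p ψ ∧ ∀ i, ψ (R i) = 1 := by
  constructor
  · rintro ⟨φ, hφ, hp⟩
    refine ⟨_, hφ.comp (QuotientGroup.mk'_surjective _), hp, fun i => ?_⟩
    rw [MonoidHom.comp_apply, QuotientGroup.mk'_apply, (QuotientGroup.eq_one_iff _).2
      (Subgroup.subset_normalClosure (Set.mem_range_self i)), map_one]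
  · rintro ⟨ψ, hψ, hp, hR⟩
    have hle := Subgroup.normalClosure_le_normal (N := ψ.ker) (Set.range_subset_iff.2 hR)
    refine ⟨QuotientGroup.lift _ ψ hle, fun g => ?_, ?_⟩
    · obtain ⟨x, rfl⟩ := hψ g
      exact ⟨QuotientGroup.mk x, rfl⟩
    · rwa [QuotientGroup.lift_comp_mk']

namespace SemidirectProduct

variable {N H : Type*} [Group H]

theorem eq_inl_left_of_right_eq_one [Group N] {φ : H →* MulAut N} {g : N ⋊[φ] H}
    (hg : g.right = 1) : g = inl g.left := by
  ext <;> simp [hg]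

theorem mul_inl_mul_inv [CommGroup N] {φ : H →* MulAut N} (g : N ⋊[φ] H) (n : N) :
    g * inl n * g⁻¹ = inl (φ g.right n) := by
  ext <;> simp [mul_comm]

end SemidirectProduct

section Extension

variable {Γ J N : Type*} [Group Γ] [Group J] [Group N] {φ : J →* MulAut N} {π : Γ →* J}

def IsConjEquivariant (φ : J →* MulAut N) (π : Γ →* J) (χ : π.ker →* N) : Prop :=
  ∀ (x : Γ) (k : π.ker), χ ⟨x * k * x⁻¹, π.normal_ker.conj_mem _ k.2 x⟩ = φ (π x) (χ k)

namespace SemidirectProduct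

def leftOnKer (ψ : Γ →* N ⋊[φ] J) (hψ : rightHom.comp ψ = π) : π.ker →* N where
  toFun k := (ψ k).left
  map_one' := by simp
  map_mul' a b := by
    have ha : (ψ a).right = 1 := (DFunLike.congr_fun hψ (a : Γ)).trans a.2
    simp [mul_left, ha]

theorem inl_leftOnKer (ψ : Γ →* N ⋊[φ] J) (hψ : rightHom.comp ψ = π) (k : π.ker) :
    inl (leftOnKer ψ hψ k) = ψ k :=
  (eq_inl_left_of_right_eq_one ((DFunLike.congr_fun hψ (k : Γ)).trans k.2)).symm

theorem leftOnKer_surjective {ψ : Γ →* N ⋊[φ] J} (hψ : rightHom.comp ψ = π)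
    (hsurj : Surjective ψ) : Surjective (leftOnKer ψ hψ) := by
  intro n
  obtain ⟨x, hx⟩ := hsurj (inl n)
  have hxπ : π x = 1 := by rw [← hψ, MonoidHom.comp_apply, hx, rightHom_inl]
  exact ⟨⟨x, hxπ⟩, by simp [leftOnKer, hx]⟩

theorem isConjEquivariant_leftOnKer {N : Type*} [CommGroup N] {φ : J →* MulAut N}
    {ψ : Γ →* N ⋊[φ] J} (hψ : rightHom.comp ψ = π) :
    IsConjEquivariant φ π (leftOnKer ψ hψ) := by
  intro x k
  refine inl_injective (φ := φ) ?_
  rw [inl_leftOnKer, ← show (ψ x).right = π x from DFunLike.congr_fun hψ x, ← mul_inl_mul_inv,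
    inl_leftOnKer]
  simp

end SemidirectProduct

open SemidirectProduct in
theorem exists_mulEquiv_semidirectProduct_of_coprime {Q : Type*} [Group Q] {ρ : Q →* J}
    (hρ : Surjective ρ) (μ : ρ.ker ≃* N) (hμ : IsConjEquivariant φ ρ μ.toMonoidHom)
    (hcop : (Nat.card N).Coprime (Nat.card J)) :
    ∃ Ψ : Q ≃* N ⋊[φ] J, rightHom.comp Ψ.toMonoidHom = ρ ∧ ∀ m : ρ.ker, Ψ m = inl (μ m) := by
  have hcop' : (Nat.card ρ.ker).Coprime ρ.ker.index := by
    rwa [Nat.card_congr μ.toEquiv, Subgroup.index_ker, ρ.range_eq_top.2 hρ, Subgroup.card_top]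
  obtain ⟨H, hH⟩ := Subgroup.exists_right_complement'_of_coprime hcop'
  let ν : H ≃* J :=
    hH.symm.QuotientMulEquiv.symm.trans (QuotientGroup.quotientKerEquivOfSurjective ρ hρ)
  have hν : ∀ h : H, ν h = ρ h := fun h => rfl
  let Ψ : Q ≃* N ⋊[φ] J := (mulEquivSubgroup hH).symm.trans (congr (φ₂ := φ) μ ν fun h => by
    ext m
    exact (hμ h m).trans (by rw [hν]; rfl))
  refine ⟨Ψ, ?_, fun m => ?_⟩
  · ext x
    obtain ⟨y, rfl⟩ := (mulEquivSubgroup hH).surjective x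
    change ν ((mulEquivSubgroup hH).symm (mulEquivSubgroup hH y)).right = ρ (y.left * y.right)
    rw [MulEquiv.symm_apply_apply, hν, map_mul, y.left.2, one_mul]
  · have hm : (mulEquivSubgroup hH).symm m = inl m := by
      rw [MulEquiv.symm_apply_eq]
      simp
    simp only [Ψ, MulEquiv.trans_apply, hm]
    ext <;> simp

variable {χ : π.ker →* N}

theorem IsConjEquivariant.normal_map_ker (hχ : IsConjEquivariant φ π χ) :
    (χ.ker.map π.ker.subtype).Normal where
  conj_mem := by
    rintro _ ⟨k, hk, rfl⟩ x
    refine ⟨⟨x * k * x⁻¹, π.normal_ker.conj_mem _ k.2 x⟩, ?_, rfl⟩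
    rw [SetLike.mem_coe, MonoidHom.mem_ker, hχ, MonoidHom.mem_ker.1 hk, map_one]

theorem exists_mulEquiv_ker_lift (hχ : Surjective χ) (hequiv : IsConjEquivariant φ π χ)
    [(χ.ker.map π.ker.subtype).Normal] :
    ∃ μ : (QuotientGroup.lift _ π (Subgroup.map_subtype_le χ.ker)).ker ≃* N,
      (∀ k : π.ker, μ ⟨QuotientGroup.mk k, k.2⟩ = χ k) ∧ IsConjEquivariant φ _ μ.toMonoidHom := by
  set L := χ.ker.map π.ker.subtype
  set ρ := QuotientGroup.lift L π (Subgroup.map_subtype_le χ.ker)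
  let s : π.ker →* ρ.ker :=
    ((QuotientGroup.mk' L).comp π.ker.subtype).codRestrict ρ.ker fun k => k.2
  have hs : Surjective s := by
    rintro ⟨y, hy⟩
    obtain ⟨x, rfl⟩ := QuotientGroup.mk_surjective y
    exact ⟨⟨x, hy⟩, rfl⟩
  have hker : s.ker = χ.ker := by
    ext k
    rw [MonoidHom.mem_ker, ← Subgroup.mem_map_iff_mem π.ker.subtype_injective,
      ← QuotientGroup.eq_one_iff, Subtype.ext_iff]
    rfl
  let μ := (QuotientGroup.quotientKerEquivOfSurjective s hs).symm.trans
    ((QuotientGroup.quotientMulEquivOfEq hker).trans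
      (QuotientGroup.quotientKerEquivOfSurjective χ hχ))
  have hμ : ∀ k, μ (s k) = χ k := by
    intro k
    have : (QuotientGroup.quotientKerEquivOfSurjective s hs).symm (s k) = k :=
      (MulEquiv.symm_apply_eq _).2 rfl
    simp only [μ, MulEquiv.trans_apply, this]
    rfl
  refine ⟨μ, hμ, fun y m => ?_⟩
  obtain ⟨x, rfl⟩ := QuotientGroup.mk_surjective y
  obtain ⟨k, rfl⟩ := hs m
  exact (hμ ⟨x * k * x⁻¹, π.normal_ker.conj_mem _ k.2 x⟩).trans
    ((hequiv x k).trans (by rw [← hμ k]; rfl))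

open SemidirectProduct in
theorem exists_surjective_hom_semidirectProduct_of_coprime (hπ : Surjective π)
    (hχ : Surjective χ) (hequiv : IsConjEquivariant φ π χ)
    (hcop : (Nat.card N).Coprime (Nat.card J)) :
    ∃ ψ : Γ →* N ⋊[φ] J, Surjective ψ ∧ rightHom.comp ψ = π ∧ ∀ k : π.ker, ψ k = inl (χ k) := by
  have := hequiv.normal_map_ker
  obtain ⟨μ, hμχ, hμ⟩ := exists_mulEquiv_ker_lift hχ hequiv
  have hρ : Surjective (QuotientGroup.lift _ π (Subgroup.map_subtype_le χ.ker)) := fun j =>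
    let ⟨x, hx⟩ := hπ j
    ⟨x, hx⟩
  obtain ⟨Ψ, hΨρ, hΨμ⟩ := exists_mulEquiv_semidirectProduct_of_coprime hρ μ hμ hcop
  refine ⟨Ψ.toMonoidHom.comp (QuotientGroup.mk' _),
    Ψ.surjective.comp (QuotientGroup.mk'_surjective _), ?_, fun k => ?_⟩
  · rw [← MonoidHom.comp_assoc, hΨρ, QuotientGroup.lift_comp_mk']
  · exact (hΨμ ⟨QuotientGroup.mk k, k.2⟩).trans (congrArg inl (hμχ k))

end Extension

section Presentation

variable {Γ J V E : Type*} [Group Γ] [Group J] {q : ℕ} [AddCommGroup V]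
  [Module (MonoidAlgebra (ZMod q) J) V] [AddCommGroup E] [Module (MonoidAlgebra (ZMod q) J) E]
  {π : Γ →* J} {θ : π.ker →* Multiplicative V}

theorem IsConjEquivariant.linearMap_comp (hθ : IsConjEquivariant (jMulAut q J V) π θ)
    (ℓ : V →ₗ[MonoidAlgebra (ZMod q) J] E) :
    IsConjEquivariant (jMulAut q J E) π
      ((AddMonoidHom.toMultiplicative ℓ.toAddMonoidHom).comp θ) := by
  intro x k
  change Multiplicative.ofAdd (ℓ (θ _).toAdd) =
    Multiplicative.ofAdd (MonoidAlgebra.of (ZMod q) J (π x) • ℓ (θ k).toAdd)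
  rw [hθ x k, jMulAut_apply, toAdd_ofAdd, map_smul]

theorem exists_linearMap_comp_eq_of_isConjEquivariant [NeZero q] (hπ : Surjective π)
    (hθ : Surjective θ)
    (hker : θ.ker = Subgroup.normalClosure
      {x | (∃ a b : π.ker, x = ⁅a, b⁆) ∨ ∃ a : π.ker, x = a ^ q})
    (hθequiv : IsConjEquivariant (jMulAut q J V) π θ) {χ : π.ker →* Multiplicative E}
    (hχ : IsConjEquivariant (jMulAut q J E) π χ) :
    ∃ ℓ : V →ₗ[MonoidAlgebra (ZMod q) J] E,
      (AddMonoidHom.toMultiplicative ℓ.toAddMonoidHom).comp θ = χ := by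
  have hle : θ.ker ≤ χ.ker := by
    rw [hker]
    refine Subgroup.normalClosure_le_normal ?_
    rintro _ (⟨a, b, rfl⟩ | ⟨a, rfl⟩) <;> rw [SetLike.mem_coe, MonoidHom.mem_ker]
    · rw [map_commutatorElement, commutatorElement_eq_one_iff_commute]
      exact mul_comm _ _
    · rw [map_pow]
      exact Multiplicative.pow_eq_one_of_zmodAlgebra (MonoidAlgebra (ZMod q) J) _
  let ℓ₀ : V →+ E := AddMonoidHom.toMultiplicative.symm (θ.liftOfSurjective hθ ⟨χ, hle⟩)
  have hℓ₀ : ∀ k, ℓ₀ (θ k).toAdd = (χ k).toAdd := fun k =>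
    congrArg Multiplicative.toAdd (θ.liftOfRightInverse_comp_apply _ _ ⟨χ, hle⟩ k)
  have hℓ₀equiv : ∀ j v, ℓ₀ (MonoidAlgebra.of (ZMod q) J j • v) =
      MonoidAlgebra.of (ZMod q) J j • ℓ₀ v := by
    intro j v
    obtain ⟨x, rfl⟩ := hπ j
    obtain ⟨k, hk⟩ := hθ (Multiplicative.ofAdd v)
    have hθx : (θ ⟨x * k * x⁻¹, π.normal_ker.conj_mem _ k.2 x⟩).toAdd =
        MonoidAlgebra.of (ZMod q) J (π x) • v := by
      rw [hθequiv x k, hk, jMulAut_apply, toAdd_ofAdd, toAdd_ofAdd]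
    rw [← hθx, hℓ₀, hχ x k, jMulAut_apply, toAdd_ofAdd, ← toAdd_ofAdd v, ← hk, hℓ₀]
  exact ⟨ℓ₀.toMonoidAlgebraLinearMap hℓ₀equiv, MonoidHom.ext hℓ₀⟩

open SemidirectProduct in
theorem exists_surjective_hom_semidirectProduct_iff [NeZero q] (hπ : Surjective π)
    (hθ : Surjective θ)
    (hker : θ.ker = Subgroup.normalClosure
      {x | (∃ a b : π.ker, x = ⁅a, b⁆) ∨ ∃ a : π.ker, x = a ^ q})
    (hequiv : IsConjEquivariant (jMulAut q J V) π θ)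
    (hcop : (Nat.card (Multiplicative E)).Coprime (Nat.card J)) {ι : Type*} (R : ι → Γ) :
    (∃ ψ : Γ →* Multiplicative E ⋊[jMulAut q J E] J,
      Surjective ψ ∧ rightHom.comp ψ = π ∧ ∀ i, ψ (R i) = 1) ↔
    ∃ h : ∀ i, R i ∈ π.ker, ∃ ℓ : V →ₗ[MonoidAlgebra (ZMod q) J] E,
      Surjective ℓ ∧ ∀ i, ℓ (θ ⟨R i, h i⟩).toAdd = 0 := by
  constructor
  · rintro ⟨ψ, hψ, hψπ, hR⟩
    have hRπ : ∀ i, R i ∈ π.ker := fun i => by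
      rw [MonoidHom.mem_ker, ← hψπ, MonoidHom.comp_apply, hR i, map_one]
    obtain ⟨ℓ, hℓ⟩ := exists_linearMap_comp_eq_of_isConjEquivariant hπ hθ hker hequiv
      (isConjEquivariant_leftOnKer hψπ)
    have hℓθ : ∀ k, ℓ (θ k).toAdd = (leftOnKer ψ hψπ k).toAdd := fun k =>
      congrArg Multiplicative.toAdd (DFunLike.congr_fun hℓ k)
    refine ⟨hRπ, ℓ, fun e => ?_, fun i => ?_⟩
    · obtain ⟨k, hk⟩ := leftOnKer_surjective hψπ hψ (Multiplicative.ofAdd e)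
      exact ⟨_, (hℓθ k).trans (congrArg Multiplicative.toAdd hk)⟩
    · rw [hℓθ, toAdd_eq_zero, ← inl_inj (φ := jMulAut q J E), inl_leftOnKer, map_one]
      exact hR i
  · rintro ⟨hRπ, ℓ, hℓ, hRℓ⟩
    have hsurj : Surjective ((AddMonoidHom.toMultiplicative ℓ.toAddMonoidHom).comp θ) := by
      intro e
      obtain ⟨v, hv⟩ := hℓ e.toAdd
      obtain ⟨k, hk⟩ := hθ (Multiplicative.ofAdd v)
      exact ⟨k, by simp [hk, hv]⟩
    obtain ⟨ψ, hψ, hψπ, hψθ⟩ :=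
      exists_surjective_hom_semidirectProduct_of_coprime hπ hsurj (hequiv.linearMap_comp ℓ) hcop
    refine ⟨ψ, hψ, hψπ, fun i => ?_⟩
    rw [show R i = ((⟨R i, hRπ i⟩ : π.ker) : Γ) from rfl, hψθ]
    simp [hRℓ i]

end Presentation

theorem exists_surjection_carrying_iff_isotypic_images_do_not_generate_general
    (n : ℕ) (J : Type*) [Group J] [Finite J]
    (f : FreeGroup (Fin n) →* J) (hf : Surjective f)
    (q : ℕ) (hq : q.Prime) (hqJ : Nat.card J < q)
    -- `V` is the `𝔽_q[J]`-module `K' = K/[K,K]K^q`, presented by a `J`-equivariant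
    -- surjection `θ : K → V` with kernel `[K,K]K^q`:
    (V : Type*) [AddCommGroup V] [Module (MonoidAlgebra (ZMod q) J) V]
    (θ : (f.ker : Subgroup (FreeGroup (Fin n))) →* Multiplicative V) (hθ : Surjective θ)
    (hker : θ.ker = Subgroup.normalClosure
      {x : (f.ker : Subgroup (FreeGroup (Fin n))) |
        (∃ a b : (f.ker : Subgroup (FreeGroup (Fin n))), x = ⁅a, b⁆) ∨
        ∃ a : (f.ker : Subgroup (FreeGroup (Fin n))), x = a ^ q})
    (hequiv : ∀ (x : FreeGroup (Fin n)) (k : (f.ker : Subgroup (FreeGroup (Fin n)))),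
      θ ⟨x * (k : FreeGroup (Fin n)) * x⁻¹, (MonoidHom.normal_ker f).conj_mem _ k.2 x⟩ =
        Multiplicative.ofAdd (MonoidAlgebra.of (ZMod q) J (f x) • (θ k).toAdd))
    -- `E` is an irreducible `𝔽_q[J]`-module:
    (E : Type*) [AddCommGroup E] [Module (MonoidAlgebra (ZMod q) J) E]
    [IsSimpleModule (MonoidAlgebra (ZMod q) J) E]
    -- a finite tuple of prospective relators:
    (k : ℕ) (R : Fin k → FreeGroup (Fin n)) :
    -- there is a surjection of `F/⟪R⟫` onto the extension `G = E ⋊ J` carrying `f` iff all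
    -- entries of `R` lie in `K` and their classes in `K'`, projected to the `E`-isotypic
    -- component of `K'`, do not generate it (equivalently, the classes together with the
    -- complement of the isotypic component do not generate `K'`):
    (∃ φ : (FreeGroup (Fin n) ⧸ Subgroup.normalClosure (Set.range R)) →*
        (Multiplicative E ⋊[jMulAut q J E] J),
      Surjective φ ∧
      SemidirectProduct.rightHom.comp
        (φ.comp (QuotientGroup.mk' (Subgroup.normalClosure (Set.range R)))) = f) ↔
    ∃ h : ∀ i, R i ∈ f.ker,
      Submodule.span (MonoidAlgebra (ZMod q) J)
          (Set.range fun i => (θ ⟨R i, h i⟩).toAdd) ⊔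
        nonIsotypicPart (MonoidAlgebra (ZMod q) J) V E ≠ ⊤ := by
  have := Fact.mk hq
  have : NeZero (Nat.card J : ZMod q) :=
    ⟨by rw [Ne, ZMod.natCast_eq_zero_iff]; exact Nat.not_dvd_of_pos_of_lt Nat.card_pos hqJ⟩
  have : Finite (MonoidAlgebra (ZMod q) J) := Module.finite_of_finite (ZMod q)
  have : Finite E := Module.finite_of_finite (MonoidAlgebra (ZMod q) J)
  have hcop := Multiplicative.coprime_card_of_zmodAlgebra (MonoidAlgebra (ZMod q) J) (V := E)
    Nat.card_pos.ne' hqJ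
  refine (exists_surjective_quotient_normalClosure_hom_iff R
    (SemidirectProduct.rightHom.comp · = f)).trans
    ((exists_surjective_hom_semidirectProduct_iff hf hθ hker hequiv hcop R).trans ?_)
  simp only [sup_nonIsotypicPart_ne_top_iff, Submodule.span_le, Set.range_subset_iff,
    SetLike.mem_coe, LinearMap.mem_ker]

theorem exists_surjection_carrying_iff_isotypic_images_do_not_generate
    (n : ℕ) (hn : 2 ≤ n) (J : Type*) [Group J] [Finite J]
    (f : FreeGroup (Fin n) →* J) (hf : Surjective f)
    (q : ℕ) (hq : q.Prime) (hqJ : Nat.card J < q)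
    -- `V` is the `𝔽_q[J]`-module `K' = K/[K,K]K^q`, presented by a `J`-equivariant
    -- surjection `θ : K → V` with kernel `[K,K]K^q`:
    (V : Type*) [AddCommGroup V] [Module (MonoidAlgebra (ZMod q) J) V]
    (θ : (f.ker : Subgroup (FreeGroup (Fin n))) →* Multiplicative V) (hθ : Surjective θ)
    (hker : θ.ker = Subgroup.normalClosure
      {x : (f.ker : Subgroup (FreeGroup (Fin n))) |
        (∃ a b : (f.ker : Subgroup (FreeGroup (Fin n))), x = ⁅a, b⁆) ∨
        ∃ a : (f.ker : Subgroup (FreeGroup (Fin n))), x = a ^ q})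
    (hequiv : ∀ (x : FreeGroup (Fin n)) (k : (f.ker : Subgroup (FreeGroup (Fin n)))),
      θ ⟨x * (k : FreeGroup (Fin n)) * x⁻¹, (MonoidHom.normal_ker f).conj_mem _ k.2 x⟩ =
        Multiplicative.ofAdd (MonoidAlgebra.of (ZMod q) J (f x) • (θ k).toAdd))
    -- `E` is an irreducible `𝔽_q[J]`-module:
    (E : Type*) [AddCommGroup E] [Module (MonoidAlgebra (ZMod q) J) E]
    [IsSimpleModule (MonoidAlgebra (ZMod q) J) E]
    -- a finite tuple of prospective relators:
    (k : ℕ) (R : Fin k → FreeGroup (Fin n)) :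
    -- there is a surjection of `F/⟪R⟫` onto the extension `G = E ⋊ J` carrying `f` iff all
    -- entries of `R` lie in `K` and their classes in `K'`, projected to the `E`-isotypic
    -- component of `K'`, do not generate it (equivalently, the classes together with the
    -- complement of the isotypic component do not generate `K'`):
    (∃ φ : (FreeGroup (Fin n) ⧸ Subgroup.normalClosure (Set.range R)) →*
        (Multiplicative E ⋊[jMulAut q J E] J),
      Surjective φ ∧
      SemidirectProduct.rightHom.comp
        (φ.comp (QuotientGroup.mk' (Subgroup.normalClosure (Set.range R)))) = f) ↔
    ∃ h : ∀ i, R i ∈ f.ker,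
      Submodule.span (MonoidAlgebra (ZMod q) J)
          (Set.range fun i => (θ ⟨R i, h i⟩).toAdd) ⊔
        nonIsotypicPart (MonoidAlgebra (ZMod q) J) V E ≠ ⊤ :=
  exists_surjection_carrying_iff_isotypic_images_do_not_generate_general n J f hf q hq hqJ V θ hθ
    hker hequiv E k R
end

section
/- Let J be a finite group, let G be a group fitting in an extension 1 → A → G → J → 1 where A is a nontrivial free abelian group, and let q be a prime not dividing |J|. Then there exist an irreducible 𝔽_q[J]-module E and a surjective homomorphism G ↠ G_E onto a group G_E fitting in an extension 1 → E → G_E → J → 1 (with conjugation in G_E inducing the module action of J on E), such that the composition G ↠ G_E → J equals the given projection G → J. -/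
/-!
Conjugation makes the abelian kernel `A` of `G → J` a `ℤ[J]`-module, so `𝔽_q ⊗ A` is a nonzero
`𝔽_q[J]`-module. By Maschke's theorem it is semisimple, hence has a simple quotient `E`; being
cyclic, `E` is isomorphic to `𝔽_q[J] ⧸ I` for a maximal left ideal `I`, which keeps it in `Type`.
The kernel of the equivariant surjection `A → E` is normal in `G`, and dividing it out turns
`1 → A → G → J → 1` into an extension `1 → E → G_E → J → 1`. This group is finite, so it can be
shrunk to `Type` as well.
-/

open Function
open scoped IsMulCommutative TensorProduct

noncomputable section

theorem IsSemisimpleModule.exists_surjective_linearMap_to_simple_quotient (R M : Type*) [Ring R]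
    [AddCommGroup M] [Module R M] [IsSemisimpleModule R M] [Nontrivial M] :
    ∃ I : Ideal R, IsSimpleModule R (R ⧸ I) ∧ ∃ f : M →ₗ[R] R ⧸ I, Surjective f := by
  obtain ⟨N, hN⟩ := IsCoatomic.exists_coatom (Submodule R M)
  have hN_simple : IsSimpleModule R (M ⧸ N) := isSimpleModule_iff_isCoatom.mpr hN
  obtain ⟨I, -, ⟨φ⟩⟩ := isSimpleModule_iff_quot_maximal.mp hN_simple
  exact ⟨I, .congr φ.symm, φ.toLinearMap.comp N.mkQ, φ.surjective.comp N.mkQ_surjective⟩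

namespace Representation

variable {R G V : Type*} [CommRing R] [Monoid G] [AddCommGroup V] [Module R V]

def baseChange (A : Type*) [CommRing A] [Algebra R A] (ρ : Representation R G V) :
    Representation A G (A ⊗[R] V) :=
  (Module.End.baseChangeHom R A V).toMonoidHom.comp ρ

@[simp]
theorem baseChange_apply_tmul (A : Type*) [CommRing A] [Algebra R A] (ρ : Representation R G V)
    (g : G) (a : A) (v : V) : ρ.baseChange A g (a ⊗ₜ v) = a ⊗ₜ ρ g v := rfl

theorem exists_surjective_equivariant_to_simple_quotient {k J V : Type*} [Field k] [Group J]
    [Finite J] [NeZero (Nat.card J : k)] [AddCommGroup V] [Module k V] [Nontrivial V]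
    (ρ : Representation k J V) :
    ∃ I : Ideal (MonoidAlgebra k J), IsSimpleModule (MonoidAlgebra k J) (MonoidAlgebra k J ⧸ I) ∧
      ∃ f : V →+ MonoidAlgebra k J ⧸ I, Surjective f ∧
        ∀ j v, f (ρ j v) = MonoidAlgebra.of k J j • f v := by
  have : Nontrivial ρ.asModule := ρ.asModuleEquiv.toEquiv.nontrivial
  obtain ⟨I, hI, f, hf⟩ :=
    IsSemisimpleModule.exists_surjective_linearMap_to_simple_quotient (MonoidAlgebra k J) ρ.asModule
  refine ⟨I, hI, f.toAddMonoidHom.comp ρ.asModuleEquiv.symm.toAddMonoidHom,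
    hf.comp ρ.asModuleEquiv.symm.surjective, fun j v => ?_⟩
  change f (ρ.asModuleEquiv.symm (ρ j v)) = _
  rw [asModuleEquiv_symm_map_rho, map_smul]
  rfl

end Representation

namespace GroupExtension

variable {N E G : Type*} [Group N] [Group E] [Group G]

def ofSurjective (π : E →* G) (hπ : Surjective π) : GroupExtension π.ker E G where
  inl := π.ker.subtype
  rightHom := π
  inl_injective := Subtype.val_injective
  range_inl_eq_ker_rightHom := π.ker.range_subtype
  rightHom_surjective := hπ

theorem finite_middle (S : GroupExtension N E G) [Finite N] [Finite G] : Finite E := by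
  have : Finite S.rightHom.ker :=
    S.range_inl_eq_ker_rightHom ▸ Finite.of_equiv N (MonoidHom.ofInjective S.inl_injective).toEquiv
  have : Finite (E ⧸ S.rightHom.ker) :=
    Finite.of_equiv G S.quotientKerRightHomEquivRight.symm.toEquiv
  exact Finite.of_subgroup_quotient S.rightHom.ker

variable (S : GroupExtension N E G)

@[simps]
def transportMiddle {E' : Type*} [Group E'] (f : E ≃* E') : GroupExtension N E' G where
  inl := f.toMonoidHom.comp S.inl
  rightHom := S.rightHom.comp f.symm.toMonoidHom
  inl_injective := f.injective.comp S.inl_injective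
  range_inl_eq_ker_rightHom := by
    rw [MonoidHom.range_comp, S.range_inl_eq_ker_rightHom, ← MonoidHom.comap_ker]
    exact Subgroup.map_equiv_eq_comap_symm f _
  rightHom_surjective := S.rightHom_surjective.comp f.symm.surjective

section Abelian

variable [IsMulCommutative N]

theorem ker_rightHom_le_ker_conjAct : S.rightHom.ker ≤ S.conjAct.ker := by
  rw [← S.range_inl_eq_ker_rightHom]
  rintro _ ⟨m, rfl⟩
  refine MulEquiv.ext fun n => S.inl_injective ?_
  rw [S.inl_conjAct_comm, ← map_inv, ← map_mul, ← map_mul, mul_inv_cancel_comm]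
  rfl

def inducedAct : G →* MulAut N :=
  S.rightHom.liftOfRightInverse (surjInv S.rightHom_surjective)
    (rightInverse_surjInv S.rightHom_surjective) ⟨S.conjAct, S.ker_rightHom_le_ker_conjAct⟩

@[simp]
theorem inducedAct_rightHom (e : E) : S.inducedAct (S.rightHom e) = S.conjAct e :=
  S.rightHom.liftOfRightInverse_comp_apply _ _ _ e

def inducedRep : Representation ℤ G (Additive N) :=
  (Representation.ofMulDistribMulAction (MulAut N) N).comp S.inducedAct

theorem exists_simple_equivariant_quotient [Finite G] (p : ℕ) [Fact p.Prime]
    [NeZero (Nat.card G : ZMod p)] [Nontrivial (ZMod p ⊗[ℤ] Additive N)] :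
    ∃ I : Ideal (MonoidAlgebra (ZMod p) G),
      IsSimpleModule (MonoidAlgebra (ZMod p) G) (MonoidAlgebra (ZMod p) G ⧸ I) ∧
      ∃ τ : N →* Multiplicative (MonoidAlgebra (ZMod p) G ⧸ I), Surjective τ ∧
        ∀ e n, τ (S.conjAct e n) =
          Multiplicative.ofAdd (MonoidAlgebra.of (ZMod p) G (S.rightHom e) • (τ n).toAdd) := by
  obtain ⟨I, hI, f, hf, hf_equiv⟩ :=
    (S.inducedRep.baseChange (ZMod p)).exists_surjective_equivariant_to_simple_quotient
  refine ⟨I, hI, AddMonoidHom.toMultiplicativeRight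
      (f.comp (TensorProduct.mk ℤ (ZMod p) (Additive N) 1).toAddMonoidHom),
    hf.comp (TensorProduct.mk_surjective (R := ℤ) (S := ZMod p) (M := Additive N)
      (ZMod.ringHom_surjective _)), fun e n => ?_⟩
  have hconj : Additive.ofMul (S.conjAct e n) = S.inducedRep (S.rightHom e) (Additive.ofMul n) := by
    simp [inducedRep]
  change Multiplicative.ofAdd (f (1 ⊗ₜ Additive.ofMul (S.conjAct e n))) = _
  rw [hconj, ← Representation.baseChange_apply_tmul, hf_equiv]
  rfl

end Abelian

section Pushforward

variable {H : Type*} [Group H] (τ : N →* H) (hτ : Surjective τ)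

theorem map_ker_normal_of_conjAct_eq (act : G → H →* H)
    (hact : ∀ e n, τ (S.conjAct e n) = act (S.rightHom e) (τ n)) : (τ.ker.map S.inl).Normal where
  conj_mem := by
    rintro _ ⟨n, hn, rfl⟩ e
    refine ⟨S.conjAct e n, ?_, S.inl_conjAct_comm⟩
    rw [SetLike.mem_coe, MonoidHom.mem_ker, hact, MonoidHom.mem_ker.mp hn, map_one]

variable [(τ.ker.map S.inl).Normal]

def pushforwardInl : H →* E ⧸ τ.ker.map S.inl :=
  τ.liftOfRightInverse (surjInv hτ) (rightInverse_surjInv hτ)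
    ⟨(QuotientGroup.mk' _).comp S.inl, fun n hn => (QuotientGroup.eq_one_iff _).mpr ⟨n, hn, rfl⟩⟩

theorem pushforwardInl_apply (n : N) :
    S.pushforwardInl τ hτ (τ n) = (S.inl n : E ⧸ τ.ker.map S.inl) :=
  τ.liftOfRightInverse_comp_apply _ _ _ n

def pushforward : GroupExtension H (E ⧸ τ.ker.map S.inl) G where
  inl := S.pushforwardInl τ hτ
  rightHom := QuotientGroup.lift _ S.rightHom
    (S.range_inl_eq_ker_rightHom ▸ Subgroup.map_le_range _ _)
  inl_injective := by
    refine (injective_iff_map_eq_one _).mpr fun h hh => ?_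
    obtain ⟨n, rfl⟩ := hτ h
    rwa [pushforwardInl_apply, QuotientGroup.eq_one_iff,
      Subgroup.mem_map_iff_mem S.inl_injective] at hh
  range_inl_eq_ker_rightHom := by
    ext x
    constructor
    · rintro ⟨h, rfl⟩
      obtain ⟨n, rfl⟩ := hτ h
      rw [MonoidHom.mem_ker, pushforwardInl_apply, QuotientGroup.lift_mk]
      exact S.rightHom_inl n
    · induction x using QuotientGroup.induction_on with | H e => ?_
      rw [MonoidHom.mem_ker, QuotientGroup.lift_mk, ← MonoidHom.mem_ker,
        ← S.range_inl_eq_ker_rightHom]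
      rintro ⟨n, rfl⟩
      exact ⟨τ n, S.pushforwardInl_apply τ hτ n⟩
  rightHom_surjective g := by
    obtain ⟨e, rfl⟩ := S.rightHom_surjective g
    exact ⟨e, rfl⟩

@[simp]
theorem pushforward_rightHom_mk (e : E) : (S.pushforward τ hτ).rightHom e = S.rightHom e := rfl

theorem pushforward_conj_inl (act : G → H →* H)
    (hact : ∀ e n, τ (S.conjAct e n) = act (S.rightHom e) (τ n))
    (x : E ⧸ τ.ker.map S.inl) (h : H) :
    x * (S.pushforward τ hτ).inl h * x⁻¹ =
      (S.pushforward τ hτ).inl (act ((S.pushforward τ hτ).rightHom x) h) := by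
  induction x using QuotientGroup.induction_on with | H e => ?_
  obtain ⟨n, rfl⟩ := hτ h
  change (e : E ⧸ τ.ker.map S.inl) * S.pushforwardInl τ hτ (τ n) * (e : E ⧸ τ.ker.map S.inl)⁻¹ =
    S.pushforwardInl τ hτ (act (S.rightHom e) (τ n))
  rw [← hact, pushforwardInl_apply, pushforwardInl_apply, S.inl_conjAct_comm]
  rfl

end Pushforward

theorem exists_small_pushforward {N E : Type*} {G H : Type} [Group N] [Group E] [Group G]
    [Group H] [Finite G] [Finite H] (S : GroupExtension N E G) (τ : N →* H) (hτ : Surjective τ)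
    (act : G → H →* H) (hact : ∀ e n, τ (S.conjAct e n) = act (S.rightHom e) (τ n)) :
    ∃ (E' : Type) (_ : Group E') (T : GroupExtension H E' G) (ψ : E →* E'),
      Surjective ψ ∧ T.rightHom.comp ψ = S.rightHom ∧
        ∀ x h, x * T.inl h * x⁻¹ = T.inl (act (T.rightHom x) h) := by
  have := S.map_ker_normal_of_conjAct_eq τ act hact
  have := (S.pushforward τ hτ).finite_middle
  let f : E ⧸ τ.ker.map S.inl ≃* Shrink.{0} (E ⧸ τ.ker.map S.inl) := Shrink.mulEquiv.symm
  refine ⟨_, _, (S.pushforward τ hτ).transportMiddle f, f.toMonoidHom.comp (QuotientGroup.mk' _),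
    f.surjective.comp (QuotientGroup.mk'_surjective _), ?_, fun x h => f.symm.injective ?_⟩
  · ext e
    simp
  · simpa using S.pushforward_conj_inl τ hτ act hact (f.symm x) h

end GroupExtension

end

/-- Let `J` be a finite group, `G` an extension `1 → A → G → J → 1` of `J` by a nontrivial free
abelian group `A = ker π`, and `q` a prime not dividing `|J|`.  Then there are an irreducible
`𝔽_q[J]`-module `E` and a surjection from `G` onto a group `G_E` which is an extension
`1 → E → G_E → J → 1` in which conjugation induces the module action of `J` on `E`, compatibly
with the projections to `J`. -/
theorem exists_irreducible_quotient_extension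
    (J : Type) [Group J] [Finite J] (G : Type*) [Group G]
    (π : G →* J) (hπ : Surjective π)
    (ι : Type*) [Nonempty ι]
    (hA : Nonempty ((π.ker : Subgroup G) ≃* Multiplicative (FreeAbelianGroup ι)))
    (q : ℕ) (hq : q.Prime) (hqJ : ¬ q ∣ Nat.card J) :
    ∃ (E : Type) (_ : AddCommGroup E) (_ : Module (MonoidAlgebra (ZMod q) J) E),
      IsSimpleModule (MonoidAlgebra (ZMod q) J) E ∧
      ∃ (GE : Type) (_ : Group GE) (ιE : Multiplicative E →* GE) (πE : GE →* J) (ψ : G →* GE),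
        Injective ιE ∧ Surjective πE ∧ ιE.range = πE.ker ∧
        (∀ (g : GE) (e : E),
          g * ιE (Multiplicative.ofAdd e) * g⁻¹ =
            ιE (Multiplicative.ofAdd (MonoidAlgebra.of (ZMod q) J (πE g) • e))) ∧
        Surjective ψ ∧ πE.comp ψ = π := by
  obtain ⟨e⟩ := hA
  have : IsMulCommutative π.ker := ⟨⟨fun a b => e.injective (by rw [map_mul, map_mul, mul_comm])⟩⟩
  have : Fact q.Prime := ⟨hq⟩
  have : NeZero (Nat.card J : ZMod q) := ⟨by rwa [Ne, ZMod.natCast_eq_zero_iff]⟩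
  have : Nontrivial (ZMod q ⊗[ℤ] Additive π.ker) := by
    obtain ⟨i⟩ := ‹Nonempty ι›
    let b := (FreeAbelianGroup.basis ι).map (MulEquiv.toAdditiveLeft e).toIntLinearEquiv.symm
    exact nontrivial_of_ne _ 0 ((b.baseChange (ZMod q)).ne_zero i)
  let S := GroupExtension.ofSurjective π hπ
  obtain ⟨I, hI, τ, hτ, hτ_conj⟩ := S.exists_simple_equivariant_quotient q
  have : Finite (MonoidAlgebra (ZMod q) J ⧸ I) := Module.finite_of_finite (ZMod q)
  obtain ⟨GE, _, T, ψ, hψ, hTψ, hT_conj⟩ := S.exists_small_pushforward τ hτ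
    (fun j => (DistribSMul.toAddMonoidHom _ (MonoidAlgebra.of (ZMod q) J j)).toMultiplicative)
    hτ_conj
  exact ⟨_, _, _, hI, GE, _, T.inl, T.rightHom, ψ, T.inl_injective, T.rightHom_surjective,
    T.range_inl_eq_ker_rightHom, fun g x => hT_conj g (.ofAdd x), hψ, hTψ⟩
end

section
/- Let Q be a group with a normal subgroup N of finite index d such that there exists a surjective homomorphism N ↠ ℤ. Then there exists a homomorphism from Q to the wreath product ℤ ≀ (Q/N) = ℤ^{Q/N} ⋊ (Q/N) whose image is infinite; in particular Q admits a surjection onto an infinite group having an abelian normal subgroup of index at most d. -/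
/-!
Choose coset representatives `t_x = x.out` of `N` in `Q`. For `g : Q` and a coset `x`, the element
`t_x⁻¹ g t_{g⁻¹x}` lies in `N`; applying `ν` coordinatewise gives a cocycle, and together with
`g ↦ gN` it defines a homomorphism `Q → ℤ ≀ (Q/N)` (the Kaloujnine–Krasner embedding of the
induced representation). On conjugates of `N` by `t_1` the coordinate at the trivial coset
recovers `ν`, so the image surjects onto `ℤ` and is infinite. The image sits in `ℤ^{Q/N} ⋊ Q/N`, so its
intersection with the abelian base `ℤ^{Q/N}` is an abelian normal subgroup of index at most `d`.
-/

open Function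

/-- The wreath product `ℤ ≀ Γ` of `ℤ` by a group `Γ`: the semidirect product of the group
`ℤ^Γ = Γ → ℤ` of functions from `Γ` to `ℤ` (written multiplicatively), on which `Γ` acts by
permuting the coordinates (via left translation on `Γ`), with `Γ`. -/
def WreathZ (Γ : Type*) [Group Γ] : Type _ :=
  (Γ → Multiplicative ℤ) ⋊[mulAutArrow (G := Γ) (A := Γ) (M := Multiplicative ℤ)] Γ

noncomputable instance (Γ : Type*) [Group Γ] : Group (WreathZ Γ) :=
  inferInstanceAs (Group ((Γ → Multiplicative ℤ) ⋊[_] Γ))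

namespace QuotientGroup

variable {Q A : Type*} [Group Q] [Group A] (N : Subgroup Q) [N.Normal] (ν : N →* A)

theorem out_inv_mul_mul_out_mem (g : Q) (x : Q ⧸ N) :
    x.out⁻¹ * g * ((g : Q ⧸ N)⁻¹ * x).out ∈ N := by
  rw [← eq_one_iff]
  simp

noncomputable def wreathCocycle (g : Q) (x : Q ⧸ N) : A :=
  ν ⟨x.out⁻¹ * g * ((g : Q ⧸ N)⁻¹ * x).out, out_inv_mul_mul_out_mem N g x⟩

theorem wreathCocycle_one : wreathCocycle N ν 1 = 1 := by
  ext x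
  simp only [wreathCocycle, mk_one, inv_one, one_mul, mul_one, inv_mul_cancel]
  exact map_one ν

theorem wreathCocycle_mul (g h : Q) (x : Q ⧸ N) :
    wreathCocycle N ν (g * h) x =
      wreathCocycle N ν g x * wreathCocycle N ν h ((g : Q ⧸ N)⁻¹ * x) := by
  simp only [wreathCocycle, ← map_mul]
  congr 1
  ext
  simp only [Subgroup.coe_mul, mk_mul, mul_inv_rev, mul_assoc]
  group

noncomputable def wreathHom : Q →* (Q ⧸ N → A) ⋊[mulAutArrow] (Q ⧸ N) where
  toFun g := ⟨wreathCocycle N ν g, g⟩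
  map_one' := SemidirectProduct.ext (wreathCocycle_one N ν) rfl
  map_mul' g h := SemidirectProduct.ext (funext (wreathCocycle_mul N ν g h)) rfl

-- `(1 : Q ⧸ N).out` need not be `1`, hence the conjugation.
theorem wreathCocycle_conj_out_one (k : N) :
    wreathCocycle N ν ((1 : Q ⧸ N).out * k * (1 : Q ⧸ N).out⁻¹) 1 = ν k := by
  have hk : ((k : Q) : Q ⧸ N) = 1 := (eq_one_iff _).2 k.2
  simp only [wreathCocycle]
  congr 1
  ext
  simp only [mk_mul, mk_inv, out_eq', hk, mul_one, inv_one]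
  group

theorem infinite_range_wreathHom [Infinite A] (hν : Surjective ν) :
    Infinite (wreathHom N ν).range := by
  refine Infinite.of_surjective (fun z => z.1.left 1) fun a => ?_
  obtain ⟨k, rfl⟩ := hν a
  exact ⟨⟨_, _, rfl⟩, wreathCocycle_conj_out_one N ν k⟩

end QuotientGroup

namespace SemidirectProduct

variable {K G : Type*} [Group G]

theorem exists_normal_isMulCommutative_index_le {H : Type*} [CommGroup K] [Group H] [Finite G]
    {φ : G →* MulAut K} (χ : H →* K ⋊[φ] G) (hχ : Injective χ) :
    ∃ B : Subgroup H,
      B.Normal ∧ IsMulCommutative B ∧ 0 < B.index ∧ B.index ≤ Nat.card G := by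
  refine ⟨(rightHom.comp χ).ker, inferInstance, ?_, ?_, ?_⟩
  · rw [← MonoidHom.comap_ker, ← range_inl_eq_ker_rightHom]
    exact Subgroup.comap_injective_isMulCommutative _ hχ
  · rw [Subgroup.index_ker]
    exact Nat.card_pos
  · rw [Subgroup.index_ker]
    exact Nat.card_le_card_of_injective _ Subtype.val_injective

instance small.{w} [Group K] {φ : G →* MulAut K} [Small.{w} K] [Small.{w} G] :
    Small.{w} (K ⋊[φ] G) :=
  small_map equivProd

end SemidirectProduct

/-- Let `Q` be a group with a normal subgroup `N` of finite index `d` admitting a surjection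
onto `ℤ`.  Then there is a homomorphism from `Q` to the wreath product `ℤ ≀ (Q/N)` with
infinite image; in particular `Q` surjects onto an infinite group having an abelian normal
subgroup of index at most `d`. -/
theorem exists_hom_to_wreath_with_infinite_image
    (Q : Type*) [Group Q] (N : Subgroup Q) [N.Normal] (d : ℕ) (hd : N.index = d)
    (hd0 : d ≠ 0) (ν : N →* Multiplicative ℤ) (hν : Surjective ν) :
    (∃ ψ : Q →* WreathZ (Q ⧸ N), Infinite ψ.range) ∧
    ∃ (G' : Type) (_ : Group G') (σ : Q →* G'),
      Surjective σ ∧ Infinite G' ∧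
      ∃ B : Subgroup G', B.Normal ∧ IsMulCommutative B ∧ 0 < B.index ∧ B.index ≤ d := by
  have : N.FiniteIndex := ⟨hd ▸ hd0⟩
  let ψ : Q →* WreathZ (Q ⧸ N) := QuotientGroup.wreathHom N ν
  have hψ : Infinite ψ.range := QuotientGroup.infinite_range_wreathHom N ν hν
  have : Small.{0} (WreathZ (Q ⧸ N)) := SemidirectProduct.small
  let e : Shrink ψ.range ≃* ψ.range := Shrink.mulEquiv
  refine ⟨⟨ψ, hψ⟩, Shrink ψ.range, inferInstance, e.symm.toMonoidHom.comp ψ.rangeRestrict,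
    e.symm.surjective.comp ψ.rangeRestrict_surjective, e.symm.infinite_iff.1 hψ, ?_⟩
  obtain ⟨B, hB⟩ := SemidirectProduct.exists_normal_isMulCommutative_index_le
    (ψ.range.subtype.comp e.toMonoidHom) (ψ.range.subtype_injective.comp e.injective)
  rw [← Subgroup.index_eq_card, hd] at hB
  exact ⟨B, hB⟩
end
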